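/- In the Robertson–Walker space-time with metric ds² = (F(t)²/a²)(dr² + r²(dθ² + sin²θ dφ²)) − dt², where a = 1 + (k/4)r² and F > 0, the frame {(a/(Fr))∂_θ, (a/(Fr))∂_φ} of the distribution Ω = span(∂_θ, ∂_φ) is parallel along every vector field of Ω′ = span(∂_r, ∂_t); hence Ω is regularly stable with respect to Ω′. -/

import Mathlib

open scoped BigOperators

/-- Partial derivative `∂f/∂x^j` at `p`. -/
noncomputable def pd {n : ℕ} (f : (Fin n → ℝ) → ℝ) (j : Fin n) (p : Fin n → ℝ) : ℝ :=
  fderiv ℝ f p (Pi.single j 1)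

/-- Christoffel symbols `Γ^i_{jk}` of the Levi-Civita connection of the metric `G`
(given as a matrix-valued function of the coordinates):
`Γ^i_{jk} = (1/2) g^{il} (∂_j g_{lk} + ∂_k g_{jl} − ∂_l g_{jk})`. -/
noncomputable def christoffel {n : ℕ} (G : (Fin n → ℝ) → Matrix (Fin n) (Fin n) ℝ)
    (p : Fin n → ℝ) (i j k : Fin n) : ℝ :=
  (1 / 2) * ∑ l, (G p)⁻¹ i l *
    (pd (fun q => G q l k) j p + pd (fun q => G q j l) k p - pd (fun q => G q j k) l p)

/-- Covariant derivative `∇_Y X` at `p`, in coordinates, for the connection with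
Christoffel symbols `Γ`: `(∇_Y X)^i = Y^j ∂_j X^i + Γ^i_{jk} Y^j X^k`. -/
noncomputable def covDeriv {n : ℕ} (Γ : (Fin n → ℝ) → Fin n → Fin n → Fin n → ℝ)
    (Y X : (Fin n → ℝ) → Fin n → ℝ) (p : Fin n → ℝ) : Fin n → ℝ :=
  fun i => fderiv ℝ (fun q => X q i) p (Y p) + ∑ j, ∑ k, Γ p i j k * Y p j * X p k

/-- The Riemann curvature operator `R(Y,Z)X` at `p` applied to tangent vectors,
in coordinates: `(R(Y,Z)X)^i = R^i_{jkl} Y^k Z^l X^j` with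
`R^i_{jkl} = ∂_k Γ^i_{lj} − ∂_l Γ^i_{kj} + Γ^i_{km}Γ^m_{lj} − Γ^i_{lm}Γ^m_{kj}`. -/
noncomputable def riemann {n : ℕ} (Γ : (Fin n → ℝ) → Fin n → Fin n → Fin n → ℝ)
    (p : Fin n → ℝ) (Y Z X : Fin n → ℝ) : Fin n → ℝ :=
  fun i => ∑ j, ∑ k, ∑ l,
    (pd (fun q => Γ q i l j) k p - pd (fun q => Γ q i k j) l p
      + ∑ m, (Γ p i k m * Γ p m l j - Γ p i l m * Γ p m k j)) * Y k * Z l * X j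

/-- The Robertson–Walker metric in coordinates `(t,r,θ,φ) = (p 0, p 1, p 2, p 3)`:
`ds² = (F(t)²/a²)(dr² + r²(dθ² + sin²θ dφ²)) − dt²` with `a = 1 + (k/4) r²`. -/
noncomputable def rwMetric (F : ℝ → ℝ) (k : ℝ) (p : Fin 4 → ℝ) : Matrix (Fin 4) (Fin 4) ℝ :=
  Matrix.diagonal ![-1,
    (F (p 0)) ^ 2 / (1 + k / 4 * (p 1) ^ 2) ^ 2,
    (F (p 0)) ^ 2 * (p 1) ^ 2 / (1 + k / 4 * (p 1) ^ 2) ^ 2,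
    (F (p 0)) ^ 2 * (p 1) ^ 2 * Real.sin (p 2) ^ 2 / (1 + k / 4 * (p 1) ^ 2) ^ 2]

set_option maxHeartbeats 2000000

/-- In Robertson–Walker space-time, the frame {(a/(Fr))∂_θ, (a/(Fr))∂_φ} of
Ω = span(∂_θ, ∂_φ) is parallel along every vector field of Ω' = span(∂_r, ∂_t);
hence Ω is regularly stable with respect to Ω'. -/
theorem robertsonWalker_regularly_stable (F : ℝ → ℝ) (hF : ∀ t, 0 < F t)
    (hFs : ContDiff ℝ (⊤ : ℕ∞) F) (k : ℝ) (hk : k = -1 ∨ k = 0 ∨ k = 1)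
    (Y : (Fin 4 → ℝ) → Fin 4 → ℝ) (hY : ∀ q, Y q 2 = 0 ∧ Y q 3 = 0)
    (p : Fin 4 → ℝ) (hr : 0 < p 1) (hθ1 : 0 < p 2) (hθ2 : p 2 < Real.pi)
    (ha : 1 + k / 4 * (p 1) ^ 2 ≠ 0) :
    covDeriv (christoffel (rwMetric F k)) Y
        (fun q i => if i = 2 then (1 + k / 4 * (q 1) ^ 2) / (F (q 0) * q 1) else 0) p = 0 ∧
      covDeriv (christoffel (rwMetric F k)) Y
        (fun q i => if i = 3 then (1 + k / 4 * (q 1) ^ 2) / (F (q 0) * q 1) else 0) p = 0 := by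
  obtain ⟨hY2, hY3⟩ := hY p
  have hFne : F (p 0) ≠ 0 := (hF _).ne'
  have hrne : p 1 ≠ 0 := hr.ne'
  have hsne : Real.sin (p 2) ≠ 0 := (Real.sin_pos_of_pos_of_lt_pi hθ1 hθ2).ne'
  have ha2 : (1 + k / 4 * (p 1 * p 1)) ≠ 0 := by
    rw [show p 1 * p 1 = p 1 ^ 2 by ring]; exact ha
  -- building blocks
  have hq0 : HasFDerivAt (fun q : Fin 4 → ℝ => q 0) (ContinuousLinearMap.proj 0 : (Fin 4 → ℝ) →L[ℝ] ℝ) p :=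
    hasFDerivAt_apply 0 p
  have hq1 : HasFDerivAt (fun q : Fin 4 → ℝ => q 1) (ContinuousLinearMap.proj 1 : (Fin 4 → ℝ) →L[ℝ] ℝ) p :=
    hasFDerivAt_apply 1 p
  have hq2 : HasFDerivAt (fun q : Fin 4 → ℝ => q 2) (ContinuousLinearMap.proj 2 : (Fin 4 → ℝ) →L[ℝ] ℝ) p :=
    hasFDerivAt_apply 2 p
  have hFd : HasDerivAt F (deriv F (p 0)) (p 0) := ((hFs.differentiable (by simp)) (p 0)).hasDerivAt
  have hFq : HasFDerivAt (fun q : Fin 4 → ℝ => F (q 0))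
      (deriv F (p 0) • (ContinuousLinearMap.proj 0 : (Fin 4 → ℝ) →L[ℝ] ℝ)) p := hFd.comp_hasFDerivAt p hq0
  have hsq : HasFDerivAt (fun q : Fin 4 → ℝ => Real.sin (q 2))
      (Real.cos (p 2) • (ContinuousLinearMap.proj 2 : (Fin 4 → ℝ) →L[ℝ] ℝ)) p :=
    by have h := (Real.hasDerivAt_sin (p 2)).comp_hasFDerivAt p hq2; exact h
  have hF2 := hFq.mul hFq
  have hr2 := hq1.mul hq1
  have hs2 := hsq.mul hsq
  have hden := ((hq1.mul hq1).const_mul (k / 4)).const_add 1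
  have hdi := (hasDerivAt_inv ha2).comp_hasFDerivAt p hden
  simp only [Function.comp_def] at hdi
  have hdinv := hdi.mul hdi
  have g11h := hF2.mul hdinv
  have g22h := (hF2.mul hr2).mul hdinv
  have g33h := ((hF2.mul hr2).mul hs2).mul hdinv
  have hFr := hFq.mul hq1
  have hFrinv := (hasDerivAt_inv (mul_ne_zero hFne hrne)).comp_hasFDerivAt p hFr
  simp only [Function.comp_def] at hFrinv
  have gXh := hden.mul hFrinv
  simp only [Pi.mul_def] at g11h g22h g33h gXh
  -- entry function identifications
  have E00 : (fun q => rwMetric F k q 0 0) = (fun _ : Fin 4 → ℝ => (-1 : ℝ)) := by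
    funext q; simp [rwMetric]
  have E11 : (fun q => rwMetric F k q 1 1) = (fun q : Fin 4 → ℝ =>
      F (q 0) * F (q 0) * ((1 + k / 4 * (q 1 * q 1))⁻¹ * (1 + k / 4 * (q 1 * q 1))⁻¹)) := by
    funext q; simp [rwMetric]
    rw [div_eq_mul_inv, pow_two (1 + k / 4 * q 1 ^ 2), mul_inv]; ring
  have E22 : (fun q => rwMetric F k q 2 2) = (fun q : Fin 4 → ℝ =>
      F (q 0) * F (q 0) * (q 1 * q 1) *
        ((1 + k / 4 * (q 1 * q 1))⁻¹ * (1 + k / 4 * (q 1 * q 1))⁻¹)) := by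
    funext q; simp [rwMetric]
    rw [div_eq_mul_inv, pow_two (1 + k / 4 * q 1 ^ 2), mul_inv]; ring
  have E33 : (fun q => rwMetric F k q 3 3) = (fun q : Fin 4 → ℝ =>
      F (q 0) * F (q 0) * (q 1 * q 1) * (Real.sin (q 2) * Real.sin (q 2)) *
        ((1 + k / 4 * (q 1 * q 1))⁻¹ * (1 + k / 4 * (q 1 * q 1))⁻¹)) := by
    funext q; simp [rwMetric]
    rw [div_eq_mul_inv, pow_two (1 + k / 4 * q 1 ^ 2), mul_inv]; ring
  have EX : (fun q : Fin 4 → ℝ => (1 + k / 4 * (q 1) ^ 2) / (F (q 0) * q 1)) =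
      (fun q : Fin 4 → ℝ => (1 + k / 4 * (q 1 * q 1)) * (F (q 0) * q 1)⁻¹) := by
    funext q; rw [div_eq_mul_inv]; ring
  -- pd facts
  have pd00 : ∀ j : Fin 4, pd (fun q => rwMetric F k q 0 0) j p = 0 := by
    intro j; rw [pd, E00]; simp
  have pdod : ∀ l m j : Fin 4, l ≠ m → pd (fun q => rwMetric F k q l m) j p = 0 := by
    intro l m j h
    have e : (fun q => rwMetric F k q l m) = fun _ : Fin 4 → ℝ => (0 : ℝ) := by
      funext q; simp [rwMetric, Matrix.diagonal_apply_ne _ h]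
    rw [pd, e]; simp
  have pd11_2 : pd (fun q => rwMetric F k q 1 1) 2 p = 0 := by
    rw [pd, E11, g11h.fderiv]
    simp [Pi.single_apply]
  have pd11_3 : pd (fun q => rwMetric F k q 1 1) 3 p = 0 := by
    rw [pd, E11, g11h.fderiv]
    simp [Pi.single_apply]
  have pd22_0 : pd (fun q => rwMetric F k q 2 2) 0 p =
      2 * F (p 0) * deriv F (p 0) * p 1 ^ 2 / (1 + k / 4 * p 1 ^ 2) ^ 2 := by
    rw [pd, E22, g22h.fderiv]
    simp [Pi.single_apply]
    simp only [show (p 1 * p 1 : ℝ) = p 1 ^ 2 by ring]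
    set A : ℝ := 1 + k / 4 * p 1 ^ 2 with hA
    field_simp
    ring
  have pd22_1 : pd (fun q => rwMetric F k q 2 2) 1 p =
      F (p 0) ^ 2 * (2 * p 1 * (1 + k / 4 * p 1 ^ 2) - k * p 1 ^ 3) /
        (1 + k / 4 * p 1 ^ 2) ^ 3 := by
    rw [pd, E22, g22h.fderiv]
    simp [Pi.single_apply]
    simp only [show (p 1 * p 1 : ℝ) = p 1 ^ 2 by ring]
    set A : ℝ := 1 + k / 4 * p 1 ^ 2 with hA
    field_simp
    ring
  have pd33_0 : pd (fun q => rwMetric F k q 3 3) 0 p =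
      2 * F (p 0) * deriv F (p 0) * p 1 ^ 2 * Real.sin (p 2) ^ 2 /
        (1 + k / 4 * p 1 ^ 2) ^ 2 := by
    rw [pd, E33, g33h.fderiv]
    simp [Pi.single_apply]
    simp only [show (p 1 * p 1 : ℝ) = p 1 ^ 2 by ring]
    set A : ℝ := 1 + k / 4 * p 1 ^ 2 with hA
    field_simp
    ring
  have pd33_1 : pd (fun q => rwMetric F k q 3 3) 1 p =
      F (p 0) ^ 2 * (2 * p 1 * (1 + k / 4 * p 1 ^ 2) - k * p 1 ^ 3) * Real.sin (p 2) ^ 2 /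
        (1 + k / 4 * p 1 ^ 2) ^ 3 := by
    rw [pd, E33, g33h.fderiv]
    simp [Pi.single_apply]
    simp only [show (p 1 * p 1 : ℝ) = p 1 ^ 2 by ring]
    set A : ℝ := 1 + k / 4 * p 1 ^ 2 with hA
    field_simp
    ring
  -- inverse metric
  have hinv : (rwMetric F k p)⁻¹ = Matrix.diagonal ![(-1 : ℝ),
      (1 + k / 4 * p 1 ^ 2) ^ 2 / F (p 0) ^ 2,
      (1 + k / 4 * p 1 ^ 2) ^ 2 / (F (p 0) ^ 2 * p 1 ^ 2),
      (1 + k / 4 * p 1 ^ 2) ^ 2 / (F (p 0) ^ 2 * p 1 ^ 2 * Real.sin (p 2) ^ 2)] := by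
    apply Matrix.inv_eq_right_inv
    ext i j
    rw [rwMetric, Matrix.diagonal_mul_diagonal]
    rcases eq_or_ne i j with rfl | hij
    · fin_cases i <;>
        simp [Matrix.diagonal_apply_eq, Matrix.one_apply_eq] <;>
        (try (set A : ℝ := 1 + k / 4 * p 1 ^ 2 with hA; field_simp)) <;> try ring
    · simp [Matrix.diagonal_apply_ne _ hij, Matrix.one_apply_ne hij]
  -- Christoffel symbols
  have G2_02 : christoffel (rwMetric F k) p 2 0 2 = deriv F (p 0) / F (p 0) := by
    simp only [christoffel, hinv, Fin.sum_univ_four]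
    simp [Matrix.diagonal_apply, pdod, pd22_0]
    set A : ℝ := 1 + k / 4 * p 1 ^ 2 with hA
    field_simp
  have G2_12 : christoffel (rwMetric F k) p 2 1 2 =
      (2 * p 1 * (1 + k / 4 * p 1 ^ 2) - k * p 1 ^ 3) /
        (2 * p 1 ^ 2 * (1 + k / 4 * p 1 ^ 2)) := by
    simp only [christoffel, hinv, Fin.sum_univ_four]
    simp [Matrix.diagonal_apply, pdod, pd22_1]
    set A : ℝ := 1 + k / 4 * p 1 ^ 2 with hA
    field_simp
  have G3_03 : christoffel (rwMetric F k) p 3 0 3 = deriv F (p 0) / F (p 0) := by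
    simp only [christoffel, hinv, Fin.sum_univ_four]
    simp [Matrix.diagonal_apply, pdod, pd33_0]
    set A : ℝ := 1 + k / 4 * p 1 ^ 2 with hA
    field_simp
  have G3_13 : christoffel (rwMetric F k) p 3 1 3 =
      (2 * p 1 * (1 + k / 4 * p 1 ^ 2) - k * p 1 ^ 3) /
        (2 * p 1 ^ 2 * (1 + k / 4 * p 1 ^ 2)) := by
    simp only [christoffel, hinv, Fin.sum_univ_four]
    simp [Matrix.diagonal_apply, pdod, pd33_1]
    set A : ℝ := 1 + k / 4 * p 1 ^ 2 with hA
    field_simp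
  have G0_02 : christoffel (rwMetric F k) p 0 0 2 = 0 := by
    simp only [christoffel, hinv, Fin.sum_univ_four]
    simp [Matrix.diagonal_apply, pdod, pd00]
  have G0_12 : christoffel (rwMetric F k) p 0 1 2 = 0 := by
    simp only [christoffel, hinv, Fin.sum_univ_four]
    simp [Matrix.diagonal_apply, pdod, pd00]
  have G1_02 : christoffel (rwMetric F k) p 1 0 2 = 0 := by
    simp only [christoffel, hinv, Fin.sum_univ_four]
    simp [Matrix.diagonal_apply, pdod, pd11_2]
  have G1_12 : christoffel (rwMetric F k) p 1 1 2 = 0 := by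
    simp only [christoffel, hinv, Fin.sum_univ_four]
    simp [Matrix.diagonal_apply, pdod, pd11_2]
  have G3_02 : christoffel (rwMetric F k) p 3 0 2 = 0 := by
    simp only [christoffel, hinv, Fin.sum_univ_four]
    simp [Matrix.diagonal_apply, pdod]
  have G3_12 : christoffel (rwMetric F k) p 3 1 2 = 0 := by
    simp only [christoffel, hinv, Fin.sum_univ_four]
    simp [Matrix.diagonal_apply, pdod]
  have G0_03 : christoffel (rwMetric F k) p 0 0 3 = 0 := by
    simp only [christoffel, hinv, Fin.sum_univ_four]
    simp [Matrix.diagonal_apply, pdod, pd00]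
  have G0_13 : christoffel (rwMetric F k) p 0 1 3 = 0 := by
    simp only [christoffel, hinv, Fin.sum_univ_four]
    simp [Matrix.diagonal_apply, pdod, pd00]
  have G1_03 : christoffel (rwMetric F k) p 1 0 3 = 0 := by
    simp only [christoffel, hinv, Fin.sum_univ_four]
    simp [Matrix.diagonal_apply, pdod, pd11_3]
  have G1_13 : christoffel (rwMetric F k) p 1 1 3 = 0 := by
    simp only [christoffel, hinv, Fin.sum_univ_four]
    simp [Matrix.diagonal_apply, pdod, pd11_3]
  have G2_03 : christoffel (rwMetric F k) p 2 0 3 = 0 := by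
    simp only [christoffel, hinv, Fin.sum_univ_four]
    simp [Matrix.diagonal_apply, pdod]
  have G2_13 : christoffel (rwMetric F k) p 2 1 3 = 0 := by
    simp only [christoffel, hinv, Fin.sum_univ_four]
    simp [Matrix.diagonal_apply, pdod]
  constructor
  · funext i
    fin_cases i <;>
      simp only [covDeriv, Fin.sum_univ_four, Pi.zero_apply] <;>
      simp [hY2, hY3]
    · simp [G0_02, G0_12]
    · simp [G1_02, G1_12]
    · rw [G2_02, G2_12, EX, gXh.fderiv]
      simp [hY2, hY3]
      set A : ℝ := 1 + k / 4 * p 1 ^ 2 with hA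
      field_simp
      ring
    · simp [G3_02, G3_12]
  · funext i
    fin_cases i <;>
      simp only [covDeriv, Fin.sum_univ_four, Pi.zero_apply] <;>
      simp [hY2, hY3]
    · simp [G0_03, G0_13]
    · simp [G1_03, G1_13]
    · simp [G2_03, G2_13]
    · rw [G3_03, G3_13, EX, gXh.fderiv]
      simp [hY2, hY3]
      set A : ℝ := 1 + k / 4 * p 1 ^ 2 with hA
      field_simp
      ring
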